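/- Let T and U be weight sequences, τ > 1, and suppose there is A ≥ 1 with U_k ≤ A (T_k)^τ for all k. Then for every 0 < a < 1 and every σ > τ there exists C ≥ 1 such that ω_T(s) ≤ τ^{-1} ω_U(a s^σ) + C for all s ≥ 0. -/

import Mathlib

noncomputable def assocOmega (M : ℕ → ℝ) (t : ℝ) : ℝ :=
  if t = 0 then 0 else ⨆ k : ℕ, Real.log (t ^ k / M k)

/-!
Taking logarithms in `U k ≤ A * T k ^ τ` gives, term by term in the supremum,
`τ * ω_T(s) ≤ ω_U(s ^ τ) + log A` for `s > 0`. Since `σ > τ`, we have `s ^ τ ≤ a * s ^ σ` for all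
large `s`, so monotonicity of `ω_U` yields the bound there; on the bounded interval
`[0, B]` that remains, `ω_T` is bounded by `ω_T(B)` while `ω_U ≥ 0`.
-/

open Filter Set Topology

section AssocOmega

variable {M : ℕ → ℝ}

-- Ratio test: since `M (k + 1) / M k → ∞`, the terms `t ^ k / M k` are summable, hence bounded.
lemma bddAbove_range_log_pow_div (hpos : ∀ k, 0 < M k)
    (hlim : Tendsto (fun k => M (k + 1) / M k) atTop atTop) {t : ℝ} (ht : 0 < t) :
    BddAbove (range fun k => Real.log (t ^ k / M k)) := by
  have hratio : Tendsto (fun k => ‖t ^ (k + 1) / M (k + 1)‖ / ‖t ^ k / M k‖) atTop (𝓝 0) := by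
    refine (tendsto_const_nhds (x := t)).div_atTop hlim |>.congr fun k => ?_
    have := hpos k
    have := hpos (k + 1)
    rw [Real.norm_of_nonneg (by positivity), Real.norm_of_nonneg (by positivity)]
    field_simp
    ring
  have hsum : Summable fun k => t ^ k / M k :=
    summable_of_ratio_test_tendsto_lt_one zero_lt_one
      (Eventually.of_forall fun k => (div_pos (pow_pos ht k) (hpos k)).ne') hratio
  obtain ⟨c, hc⟩ := hsum.tendsto_atTop_zero.bddAbove_range
  refine ⟨c, forall_mem_range.2 fun k => ?_⟩
  exact (Real.log_le_self (div_pos (pow_pos ht k) (hpos k)).le).trans (hc (mem_range_self k))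

lemma log_pow_div_le_assocOmega (hpos : ∀ k, 0 < M k)
    (hlim : Tendsto (fun k => M (k + 1) / M k) atTop atTop) {t : ℝ} (ht : 0 < t) (k : ℕ) :
    Real.log (t ^ k / M k) ≤ assocOmega M t := by
  rw [assocOmega, if_neg ht.ne']
  exact le_ciSup (bddAbove_range_log_pow_div hpos hlim ht) k

lemma assocOmega_nonneg (hpos : ∀ k, 0 < M k) (hM0 : M 0 = 1)
    (hlim : Tendsto (fun k => M (k + 1) / M k) atTop atTop) {t : ℝ} (ht : 0 ≤ t) :
    0 ≤ assocOmega M t := by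
  rcases ht.eq_or_lt with rfl | ht
  · simp [assocOmega]
  · simpa [hM0] using log_pow_div_le_assocOmega hpos hlim ht 0

lemma assocOmega_monotoneOn (hpos : ∀ k, 0 < M k) (hM0 : M 0 = 1)
    (hlim : Tendsto (fun k => M (k + 1) / M k) atTop atTop) :
    MonotoneOn (assocOmega M) (Ici 0) := by
  intro s hs t ht hst
  rcases (mem_Ici.1 hs).eq_or_lt with rfl | hs
  · simpa [assocOmega] using assocOmega_nonneg hpos hM0 hlim ht
  rw [assocOmega, if_neg hs.ne']
  refine ciSup_le fun k => (Real.log_le_log ?_ ?_).trans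
    (log_pow_div_le_assocOmega hpos hlim (hs.trans_le hst) k)
  · exact div_pos (pow_pos hs k) (hpos k)
  · gcongr
    exact (hpos k).le

end AssocOmega

lemma assocOmega_le_of_le_mul_rpow {T U : ℕ → ℝ} (hTpos : ∀ k, 0 < T k) (hUpos : ∀ k, 0 < U k)
    (hUlim : Tendsto (fun k => U (k + 1) / U k) atTop atTop) {τ A : ℝ} (hτ : 0 < τ)
    (hA : 0 < A) (h : ∀ k, U k ≤ A * T k ^ τ) {t : ℝ} (ht : 0 < t) :
    assocOmega T t ≤ τ⁻¹ * (assocOmega U (t ^ τ) + Real.log A) := by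
  rw [assocOmega, if_neg ht.ne']
  refine ciSup_le fun k => ?_
  have hlogU : Real.log (U k) ≤ Real.log A + τ * Real.log (T k) := by
    rw [← Real.log_rpow (hTpos k), ← Real.log_mul hA.ne' (Real.rpow_pos_of_pos (hTpos k) τ).ne']
    exact Real.log_le_log (hUpos k) (h k)
  have hterm := log_pow_div_le_assocOmega hUpos hUlim (Real.rpow_pos_of_pos ht τ) k
  rw [Real.log_div (pow_pos (Real.rpow_pos_of_pos ht τ) k).ne' (hUpos k).ne', Real.log_pow,
    Real.log_rpow ht] at hterm
  rw [Real.log_div (pow_pos ht k).ne' (hTpos k).ne', Real.log_pow, le_inv_mul_iff₀ hτ]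
  linarith

lemma eventually_rpow_le_mul_rpow {a τ σ : ℝ} (ha : 0 < a) (hτσ : τ < σ) :
    ∀ᶠ s in atTop, s ^ τ ≤ a * s ^ σ := by
  filter_upwards [(tendsto_rpow_atTop (sub_pos.2 hτσ)).eventually_ge_atTop a⁻¹,
    eventually_gt_atTop 0] with s hs hs0
  calc s ^ τ = a * a⁻¹ * s ^ τ := by field_simp
    _ ≤ a * s ^ (σ - τ) * s ^ τ := by gcongr
    _ = a * s ^ σ := by rw [mul_assoc, ← Real.rpow_add hs0, sub_add_cancel]

theorem omega_bound_with_larger_exponent_general (T U : ℕ → ℝ)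
    (hTpos : ∀ k, 0 < T k) (hT0 : T 0 = 1)
    (hTlim : Filter.Tendsto (fun k => T (k + 1) / T k) Filter.atTop Filter.atTop)
    (hUpos : ∀ k, 0 < U k) (hU0 : U 0 = 1)
    (hUlim : Filter.Tendsto (fun k => U (k + 1) / U k) Filter.atTop Filter.atTop)
    (τ : ℝ) (hτ : 1 < τ) (A : ℝ) (hA : 1 ≤ A)
    (h : ∀ k : ℕ, U k ≤ A * T k ^ τ) :
    ∀ a σ : ℝ, 0 < a → a < 1 → τ < σ →
      ∃ C : ℝ, 1 ≤ C ∧ ∀ s : ℝ, 0 ≤ s →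
        assocOmega T s ≤ τ⁻¹ * assocOmega U (a * s ^ σ) + C := by
  intro a σ ha _ hσ
  have hτ0 : 0 < τ := zero_lt_one.trans hτ
  obtain ⟨B, hB⟩ := eventually_atTop.1
    ((eventually_rpow_le_mul_rpow ha hσ).and (eventually_gt_atTop 0))
  have hB0 : 0 < B := (hB B le_rfl).2
  have hωTB := assocOmega_nonneg hTpos hT0 hTlim hB0.le
  have hlogA : 0 ≤ τ⁻¹ * Real.log A := mul_nonneg (inv_nonneg.2 hτ0.le) (Real.log_nonneg hA)
  refine ⟨assocOmega T B + τ⁻¹ * Real.log A + 1, by linarith, fun s hs => ?_⟩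
  have hωU := mul_nonneg (inv_nonneg.2 hτ0.le)
    (assocOmega_nonneg hUpos hU0 hUlim (t := a * s ^ σ) (by positivity))
  rcases le_or_gt B s with hBs | hsB
  · have hs0 := hB0.trans_le hBs
    have hmono : assocOmega U (s ^ τ) ≤ assocOmega U (a * s ^ σ) :=
      assocOmega_monotoneOn hUpos hU0 hUlim (Real.rpow_nonneg hs τ)
        (mem_Ici.2 (by positivity)) (hB s hBs).1
    calc assocOmega T s ≤ τ⁻¹ * (assocOmega U (s ^ τ) + Real.log A) :=
          assocOmega_le_of_le_mul_rpow hTpos hUpos hUlim hτ0 (zero_lt_one.trans_le hA) h hs0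
      _ ≤ τ⁻¹ * (assocOmega U (a * s ^ σ) + Real.log A) := by gcongr
      _ ≤ _ := by linarith
  · have := assocOmega_monotoneOn hTpos hT0 hTlim hs hB0.le hsB.le
    linarith

theorem omega_bound_with_larger_exponent (T U : ℕ → ℝ)
    (hTpos : ∀ k, 0 < T k) (hT0 : T 0 = 1) (hT1 : 1 ≤ T 1)
    (hTmono : Monotone fun k => T (k + 1) / T k)
    (hTlim : Filter.Tendsto (fun k => T (k + 1) / T k) Filter.atTop Filter.atTop)
    (hUpos : ∀ k, 0 < U k) (hU0 : U 0 = 1) (hU1 : 1 ≤ U 1)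
    (hUmono : Monotone fun k => U (k + 1) / U k)
    (hUlim : Filter.Tendsto (fun k => U (k + 1) / U k) Filter.atTop Filter.atTop)
    (τ : ℝ) (hτ : 1 < τ) (A : ℝ) (hA : 1 ≤ A)
    (h : ∀ k : ℕ, U k ≤ A * T k ^ τ) :
    ∀ a σ : ℝ, 0 < a → a < 1 → τ < σ →
      ∃ C : ℝ, 1 ≤ C ∧ ∀ s : ℝ, 0 ≤ s →
        assocOmega T s ≤ τ⁻¹ * assocOmega U (a * s ^ σ) + C :=
  omega_bound_with_larger_exponent_general T U hTpos hT0 hTlim hUpos hU0 hUlim τ hτ A hA h
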